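/- If bounded operators U, V on H satisfy U U† + V V† = I = U† U + Vᵀ V̄ and V is Hilbert–Schmidt, then the kernels ker U and ker U† are finite-dimensional and have the same dimension: dim(ker U) = dim(ker U†) < ∞. -/

import Mathlib

/-!
Since `ker (U U†) = ker U†`, the identity `U U† + V V† = 1` gives `g ∈ ker U† ↔ V V† g = g`;
likewise, after conjugating `U† U + Vᵀ V̄ = 1` by `J`, `f ∈ ker U ↔ V† V (J f) = J f`. Hence
`f ↦ V (J f)` maps `ker U` into `ker U†` and `g ↦ J (V† g)` maps `ker U†` into `ker U`, both
turning `⟪x, y⟫` into `⟪y, x⟫`; so they carry orthonormal families to orthonormal families and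
each dimension bounds the other.

For finiteness, `V ∘ J` sends an orthonormal family in `ker U` to unit vectors, and so does `V†`
on `ker U†`. But a Hilbert–Schmidt operator `W` sends every orthonormal family `(gₖ)` to a
square-summable one: Parseval in a Hilbert basis `(eᵢ)` and Bessel in `(gₖ)` give
`∑ₖ ‖W† gₖ‖² ≤ ∑ᵢ ‖W eᵢ‖²`, which applies to `W` as well as to `W†`.
-/

open scoped InnerProductSpace
open ContinuousLinearMap

variable {H : Type*} [NormedAddCommGroup H] [InnerProductSpace ℂ H] [CompleteSpace H]

def IsHilbertSchmidt (V : H →L[ℂ] H) : Prop :=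
  ∃ (ι : Type) (e : HilbertBasis ι ℂ H), Summable fun i => ‖V (e i)‖ ^ 2

universe u

section

variable {𝕜 : Type*} [RCLike 𝕜] {E : Type u} {F : Type*} [NormedAddCommGroup E]
  [InnerProductSpace 𝕜 E] [NormedAddCommGroup F] [InnerProductSpace 𝕜 F]

theorem HilbertBasis.hasSum_norm_inner_sq {ι : Type*} (b : HilbertBasis ι 𝕜 E) (x : E) :
    HasSum (fun i => ‖⟪b i, x⟫_𝕜‖ ^ 2) (‖x‖ ^ 2) := by
  rw [← RCLike.hasSum_ofReal 𝕜]
  convert b.hasSum_inner_mul_inner x x using 1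
  · ext i
    rw [← inner_conj_symm x (b i), RCLike.conj_mul]
    norm_cast
  · exact_mod_cast (inner_self_eq_norm_sq_to_K (𝕜 := 𝕜) x).symm

theorem Orthonormal.comp_of_inner_map_map {ι : Type*} {v : ι → E} (hv : Orthonormal 𝕜 v)
    {Φ : E → F} (hΦ : ∀ i j, ⟪Φ (v i), Φ (v j)⟫_𝕜 = ⟪v j, v i⟫_𝕜) : Orthonormal 𝕜 (Φ ∘ v) := by
  classical
  rw [orthonormal_iff_ite] at hv ⊢
  intro i j
  rw [Function.comp_apply, Function.comp_apply, hΦ, hv]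
  exact if_congr eq_comm rfl rfl

theorem Orthonormal.card_le_finrank {ι : Type*} [Fintype ι] {v : ι → E} (hv : Orthonormal 𝕜 v)
    {K : Submodule 𝕜 E} [FiniteDimensional 𝕜 K] (hvK : ∀ i, v i ∈ K) :
    Fintype.card ι ≤ Module.finrank 𝕜 K := by
  have hv' : Orthonormal 𝕜 fun i => (⟨v i, hvK i⟩ : K) := by
    rwa [← K.subtypeₗᵢ.orthonormal_comp_iff]
  exact hv'.linearIndependent.fintype_card_le_finrank

theorem Submodule.finrank_le_of_inner_map_map (K : Submodule 𝕜 E) (K' : Submodule 𝕜 F)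
    [FiniteDimensional 𝕜 K] [FiniteDimensional 𝕜 K'] {Φ : E → F} (hΦK : ∀ x ∈ K, Φ x ∈ K')
    (hΦ : ∀ x ∈ K, ∀ y ∈ K, ⟪Φ x, Φ y⟫_𝕜 = ⟪y, x⟫_𝕜) :
    Module.finrank 𝕜 K ≤ Module.finrank 𝕜 K' := by
  let b := stdOrthonormalBasis 𝕜 K
  have hb : Orthonormal 𝕜 fun i => (b i : E) := b.orthonormal.comp_linearIsometry K.subtypeₗᵢ
  have := (hb.comp_of_inner_map_map fun i j => hΦ _ (b i).2 _ (b j).2).card_le_finrank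
    fun i => hΦK _ (b i).2
  simpa using this

theorem Submodule.finiteDimensional_of_forall_orthonormal [CompleteSpace E] {K : Submodule 𝕜 E}
    (hK : IsClosed (K : Set E))
    (h : ∀ {ι : Type u} {v : ι → E}, Orthonormal 𝕜 v → (∀ i, v i ∈ K) → Finite ι) :
    FiniteDimensional 𝕜 K := by
  have : CompleteSpace K := hK.completeSpace_coe
  obtain ⟨w, b, -⟩ := exists_hilbertBasis 𝕜 K
  have : Fintype w :=
    have := h (b.orthonormal.comp_linearIsometry K.subtypeₗᵢ) fun i => (b i).2
    Fintype.ofFinite w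
  exact Module.Finite.of_basis b.toOrthonormalBasis.toBasis

variable [CompleteSpace E] [CompleteSpace F]

theorem ContinuousLinearMap.mem_ker_adjoint_iff_of_comp_adjoint_add_eq_one {A T : E →L[𝕜] E}
    (h : A ∘L adjoint A + T = 1) (x : E) :
    x ∈ LinearMap.ker (adjoint A : E →ₗ[𝕜] E) ↔ T x = x := by
  have hx : A (adjoint A x) = x - T x := eq_sub_of_add_eq (by simpa using congr($h x))
  rw [← ker_self_comp_adjoint, LinearMap.mem_ker, coe_coe, comp_apply, hx, sub_eq_zero, eq_comm]

theorem ContinuousLinearMap.inner_map_map_of_adjoint_apply_apply (T : E →L[𝕜] F) (x : E) {y : E}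
    (hy : adjoint T (T y) = y) : ⟪T x, T y⟫_𝕜 = ⟪x, y⟫_𝕜 := by
  rw [← adjoint_inner_right, hy]

theorem ContinuousLinearMap.norm_map_of_adjoint_apply_apply (T : E →L[𝕜] F) {x : E}
    (hx : adjoint T (T x) = x) : ‖T x‖ = ‖x‖ := by
  rw [← sq_eq_sq₀ (norm_nonneg _) (norm_nonneg _), ← inner_self_eq_norm_sq (𝕜 := 𝕜),
    ← inner_self_eq_norm_sq (𝕜 := 𝕜), T.inner_map_map_of_adjoint_apply_apply x hx]

theorem HilbertBasis.sum_norm_adjoint_apply_sq_le {ι κ : Type*} (e : HilbertBasis ι 𝕜 E)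
    (W : E →L[𝕜] F) (hW : Summable fun i => ‖W (e i)‖ ^ 2) {g : κ → F} (hg : Orthonormal 𝕜 g)
    (s : Finset κ) : ∑ k ∈ s, ‖adjoint W (g k)‖ ^ 2 ≤ ∑' i, ‖W (e i)‖ ^ 2 := by
  have parseval (k : κ) : HasSum (fun i => ‖⟪g k, W (e i)⟫_𝕜‖ ^ 2) (‖adjoint W (g k)‖ ^ 2) := by
    simpa only [adjoint_inner_right, norm_inner_symm] using
      e.hasSum_norm_inner_sq (adjoint W (g k))
  calc ∑ k ∈ s, ‖adjoint W (g k)‖ ^ 2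
      = ∑' i, ∑ k ∈ s, ‖⟪g k, W (e i)⟫_𝕜‖ ^ 2 := by
        rw [Summable.tsum_finsetSum fun k _ => (parseval k).summable]
        exact Finset.sum_congr rfl fun k _ => (parseval k).tsum_eq.symm
    _ ≤ ∑' i, ‖W (e i)‖ ^ 2 :=
        Summable.tsum_le_tsum (fun i => hg.sum_inner_products_le _)
          (summable_sum fun k _ => (parseval k).summable) hW

end

theorem IsHilbertSchmidt.summable_norm_adjoint_apply_sq {W : H →L[ℂ] H} (hW : IsHilbertSchmidt W)
    {κ : Type*} {g : κ → H} (hg : Orthonormal ℂ g) :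
    Summable fun k => ‖adjoint W (g k)‖ ^ 2 :=
  let ⟨_, e, he⟩ := hW
  summable_of_sum_le (fun _ => sq_nonneg _) (e.sum_norm_adjoint_apply_sq_le W he hg)

theorem IsHilbertSchmidt.adjoint {W : H →L[ℂ] H} (hW : IsHilbertSchmidt W) :
    IsHilbertSchmidt (adjoint W) :=
  let ⟨ι, e, _⟩ := hW
  ⟨ι, e, hW.summable_norm_adjoint_apply_sq e.orthonormal⟩

theorem IsHilbertSchmidt.summable_norm_apply_sq {W : H →L[ℂ] H} (hW : IsHilbertSchmidt W)
    {κ : Type*} {g : κ → H} (hg : Orthonormal ℂ g) : Summable fun k => ‖W (g k)‖ ^ 2 := by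
  simpa using hW.adjoint.summable_norm_adjoint_apply_sq hg

theorem IsHilbertSchmidt.finite_of_orthonormal {W : H →L[ℂ] H} (hW : IsHilbertSchmidt W)
    {κ : Type*} {g : κ → H} (hg : Orthonormal ℂ g) (hWg : ∀ k, ‖W (g k)‖ = ‖g k‖) : Finite κ := by
  by_contra hinf
  rw [not_finite_iff_infinite] at hinf
  have := hW.summable_norm_apply_sq hg
  simp only [hWg, hg.1, one_pow] at this
  exact one_ne_zero ((summable_const_iff 1).1 this)

theorem finrank_ker_eq_general
    -- the antiunitary involution `f ↦ f* = J f`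
    (J : H → H)
    (hJ_invol : ∀ f, J (J f) = f)
    (hJ_inner : ∀ f g : H, ⟪J f, J g⟫_ℂ = ⟪g, f⟫_ℂ)
    (U V Vbar Vt : H →L[ℂ] H)
    (hVbar : ∀ f, Vbar f = J (V (J f)))
    (hVt : ∀ f, Vt f = J (adjoint V (J f)))
    (h1 : U ∘L adjoint U + V ∘L adjoint V = 1)
    (h2 : adjoint U ∘L U + Vt ∘L Vbar = 1)
    (hV : IsHilbertSchmidt V) :
    FiniteDimensional ℂ (LinearMap.ker (U : H →ₗ[ℂ] H)) ∧
    FiniteDimensional ℂ (LinearMap.ker (adjoint U : H →ₗ[ℂ] H)) ∧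
    Module.finrank ℂ (LinearMap.ker (U : H →ₗ[ℂ] H)) = Module.finrank ℂ (LinearMap.ker (adjoint U : H →ₗ[ℂ] H)) := by
  have mem_ker_adjoint (y : H) :
      y ∈ LinearMap.ker (adjoint U : H →ₗ[ℂ] H) ↔ V (adjoint V y) = y :=
    mem_ker_adjoint_iff_of_comp_adjoint_add_eq_one h1 y
  have mem_ker (x : H) : x ∈ LinearMap.ker (U : H →ₗ[ℂ] H) ↔ adjoint V (V (J x)) = J x := by
    rw [← adjoint_adjoint U,
      mem_ker_adjoint_iff_of_comp_adjoint_add_eq_one (by rwa [adjoint_adjoint]), comp_apply, hVbar,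
      hVt, hJ_invol]
    exact ⟨fun h => (hJ_invol _).symm.trans (congrArg J h), fun h => by rw [h, hJ_invol]⟩
  have : FiniteDimensional ℂ (LinearMap.ker (U : H →ₗ[ℂ] H)) :=
    Submodule.finiteDimensional_of_forall_orthonormal (isClosed_ker U) fun hv hvK =>
      hV.finite_of_orthonormal (hv.comp_of_inner_map_map fun _ _ => hJ_inner _ _)
        fun i => V.norm_map_of_adjoint_apply_apply ((mem_ker _).1 (hvK i))
  have : FiniteDimensional ℂ (LinearMap.ker (adjoint U : H →ₗ[ℂ] H)) :=
    Submodule.finiteDimensional_of_forall_orthonormal (isClosed_ker _) fun hv hvK =>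
      hV.adjoint.finite_of_orthonormal hv fun i =>
        (adjoint V).norm_map_of_adjoint_apply_apply
          (by rw [adjoint_adjoint]; exact (mem_ker_adjoint _).1 (hvK i))
  refine ⟨‹_›, ‹_›, le_antisymm ?_ ?_⟩
  · refine Submodule.finrank_le_of_inner_map_map _ _ (Φ := fun x => V (J x))
      (fun x hx => (mem_ker_adjoint _).2 (by rw [(mem_ker x).1 hx])) fun x _ y hy => ?_
    rw [V.inner_map_map_of_adjoint_apply_apply _ ((mem_ker y).1 hy), hJ_inner]
  · refine Submodule.finrank_le_of_inner_map_map _ _ (Φ := fun y => J (adjoint V y))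
      (fun y hy => (mem_ker _).2 (by rw [hJ_invol, (mem_ker_adjoint y).1 hy])) fun x hx y _ => ?_
    rw [hJ_inner, (adjoint V).inner_map_map_of_adjoint_apply_apply _
      (by rw [adjoint_adjoint]; exact (mem_ker_adjoint x).1 hx)]

/-- If `U U† + V V† = I = U† U + Vᵀ V̄` and `V` is Hilbert–Schmidt, then
`ker U` and `ker U†` are finite-dimensional with `dim (ker U) = dim (ker U†) < ∞`. -/
theorem finrank_ker_eq
    [TopologicalSpace.SeparableSpace H]
    -- the antiunitary involution `f ↦ f* = J f`
    (J : H → H)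
    (hJ_add : ∀ f g, J (f + g) = J f + J g)
    (hJ_smul : ∀ (c : ℂ) (f : H), J (c • f) = (starRingEnd ℂ) c • J f)
    (hJ_invol : ∀ f, J (J f) = f)
    (hJ_inner : ∀ f g : H, ⟪J f, J g⟫_ℂ = ⟪g, f⟫_ℂ)
    (U V Vbar Vt : H →L[ℂ] H)
    (hVbar : ∀ f, Vbar f = J (V (J f)))
    (hVt : ∀ f, Vt f = J (adjoint V (J f)))
    (h1 : U ∘L adjoint U + V ∘L adjoint V = 1)
    (h2 : adjoint U ∘L U + Vt ∘L Vbar = 1)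
    (hV : IsHilbertSchmidt V) :
    FiniteDimensional ℂ (LinearMap.ker (U : H →ₗ[ℂ] H)) ∧
    FiniteDimensional ℂ (LinearMap.ker (adjoint U : H →ₗ[ℂ] H)) ∧
    Module.finrank ℂ (LinearMap.ker (U : H →ₗ[ℂ] H)) = Module.finrank ℂ (LinearMap.ker (adjoint U : H →ₗ[ℂ] H)) :=
  finrank_ker_eq_general J hJ_invol hJ_inner U V Vbar Vt hVbar hVt h1 h2 hV
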